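/- For x ∈ (-1,1), x ≠ 0, define D(x) = (K(x) - E(x))/x². Then D(x) = π·∑_{i=0}^{∞} ((i+1)/(2i+1))·((2i+1)!!/(2i+2)!!)²·x^{2i}. -/

import Mathlib

open Real

noncomputable def ellipticK (k : ℝ) : ℝ := ∫ θ in (0:ℝ)..(π / 2), 1 / Real.sqrt (1 - k ^ 2 * sin θ ^ 2)

noncomputable def ellipticE (k : ℝ) : ℝ := ∫ θ in (0:ℝ)..(π / 2), Real.sqrt (1 - k ^ 2 * sin θ ^ 2)

/-! With `w n = (2n-1)‼/(2n)‼` (`wallisCoeff`), the binomial series gives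
`1/√(1-t) = ∑ w n tⁿ` for `|t| < 1`, while `K k - E k = k² ∫₀^{π/2} sin²θ / √(1 - k² sin²θ) dθ`.
Expanding the integrand and integrating termwise (dominated by the geometric series in `k²`),
Wallis' formula `∫₀^{π/2} sin^{2m} = (π/2) w m` turns the `n`-th term into
`(π/2) w n w (n+1) k^{2n}`, and `w n = (2n+2)/(2n+1) · w (n+1)`. -/

open Finset Nat

noncomputable def wallisCoeff (n : ℕ) : ℝ := ∏ i ∈ range n, (2 * (i : ℝ) + 1) / (2 * i + 2)

lemma wallisCoeff_succ (n : ℕ) :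
    wallisCoeff (n + 1) = wallisCoeff n * ((2 * n + 1) / (2 * n + 2)) :=
  prod_range_succ _ n

lemma wallisCoeff_nonneg (n : ℕ) : 0 ≤ wallisCoeff n :=
  prod_nonneg fun _ _ => by positivity

lemma wallisCoeff_le_one (n : ℕ) : wallisCoeff n ≤ 1 :=
  prod_le_one (fun _ _ => by positivity) fun _ _ => (div_le_one (by positivity)).2 (by linarith)

lemma wallisCoeff_succ_eq_doubleFactorial (n : ℕ) :
    wallisCoeff (n + 1) = ((2 * n + 1)‼ : ℝ) / (2 * n + 2)‼ := by
  induction n with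
  | zero => simp [wallisCoeff]
  | succ n ih =>
    rw [wallisCoeff_succ, ih, show 2 * (n + 1) + 1 = 2 * n + 1 + 2 by ring,
      show 2 * (n + 1) + 2 = 2 * n + 2 + 2 by ring, Nat.doubleFactorial_add_two (2 * n + 1),
      Nat.doubleFactorial_add_two (2 * n + 2)]
    push_cast
    field_simp
    ring

lemma factorial_mul_wallisCoeff (n : ℕ) :
    n ! * wallisCoeff n = (ascPochhammer ℝ n).eval (1 / 2) := by
  induction n with
  | zero => simp [wallisCoeff]
  | succ n ih =>
    rw [wallisCoeff_succ, ascPochhammer_succ_eval, ← ih, Nat.factorial_succ]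
    push_cast
    field_simp
    ring

lemma ringChoose_eq_wallisCoeff (n : ℕ) : Ring.choose ((1 / 2 : ℝ) + n - 1) n = wallisCoeff n := by
  rw [← Ring.multichoose_eq, ← mul_right_inj' (Nat.cast_ne_zero.2 n.factorial_ne_zero),
    factorial_mul_wallisCoeff, ← nsmul_eq_mul, Ring.factorial_nsmul_multichoose_eq_ascPochhammer,
    Polynomial.ascPochhammer_smeval_eq_eval]

lemma hasSum_wallisCoeff_mul_pow {t : ℝ} (ht : |t| < 1) :
    HasSum (fun n => wallisCoeff n * t ^ n) (1 / √(1 - t)) := by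
  have h := (one_div_one_sub_rpow_hasFPowerSeriesOnBall_zero (1 / 2)).hasSum
    (y := t) (by simpa [enorm_eq_nnnorm, ← NNReal.coe_lt_coe] using ht)
  simp only [FormalMultilinearSeries.ofScalars_apply_eq, smul_eq_mul, ringChoose_eq_wallisCoeff,
    zero_add, ← sqrt_eq_rpow] at h
  simpa only [mul_comm] using h

lemma integral_sin_pow_even_zero_pi_div_two (n : ℕ) :
    ∫ θ in 0..π / 2, sin θ ^ (2 * n) = π / 2 * wallisCoeff n := by
  induction n with
  | zero => simp [wallisCoeff]
  | succ n ih =>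
    rw [wallisCoeff_succ, ← mul_assoc, ← ih, Nat.mul_succ, integral_sin_pow]
    simp [mul_comm]

lemma one_sub_sq_mul_sin_sq_pos {k : ℝ} (hk : k ^ 2 < 1) (θ : ℝ) : 0 < 1 - k ^ 2 * sin θ ^ 2 := by
  nlinarith [sin_sq_le_one θ, sq_nonneg (sin θ), sq_nonneg k]

lemma ellipticK_sub_ellipticE {k : ℝ} (hk : k ^ 2 < 1) :
    ellipticK k - ellipticE k = k ^ 2 * ∫ θ in 0..π / 2, sin θ ^ 2 / √(1 - k ^ 2 * sin θ ^ 2) := by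
  have hne : ∀ θ, √(1 - k ^ 2 * sin θ ^ 2) ≠ 0 :=
    fun θ => (sqrt_pos.2 (one_sub_sq_mul_sin_sq_pos hk θ)).ne'
  rw [ellipticK, ellipticE, ← intervalIntegral.integral_sub
    (by apply Continuous.intervalIntegrable; fun_prop (disch := exact hne))
    (by apply Continuous.intervalIntegrable; fun_prop), ← intervalIntegral.integral_const_mul]
  refine intervalIntegral.integral_congr fun θ _ => ?_
  have hsq := sq_sqrt (one_sub_sq_mul_sin_sq_pos hk θ).le
  field_simp [hne θ]
  rw [hsq]
  ring

lemma hasSum_integral_sin_sq_div_sqrt {k : ℝ} (hk : k ^ 2 < 1) :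
    HasSum (fun n => wallisCoeff n * k ^ (2 * n) * ∫ θ in 0..π / 2, sin θ ^ (2 * (n + 1)))
      (∫ θ in 0..π / 2, sin θ ^ 2 / √(1 - k ^ 2 * sin θ ^ 2)) := by
  have hpoint : ∀ θ, HasSum (fun n => wallisCoeff n * k ^ (2 * n) * sin θ ^ (2 * (n + 1)))
      (sin θ ^ 2 / √(1 - k ^ 2 * sin θ ^ 2)) := by
    intro θ
    have hlt : |k ^ 2 * sin θ ^ 2| < 1 := by
      rw [abs_of_nonneg (by positivity)]; linarith [one_sub_sq_mul_sin_sq_pos hk θ]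
    rw [div_eq_mul_one_div]
    exact ((hasSum_wallisCoeff_mul_pow hlt).mul_left (sin θ ^ 2)).congr_fun fun n => by ring
  have hbound : ∀ n θ, ‖wallisCoeff n * k ^ (2 * n) * sin θ ^ (2 * (n + 1))‖ ≤ (k ^ 2) ^ n := by
    intro n θ
    rw [Real.norm_eq_abs, abs_mul, abs_mul, abs_pow, abs_pow, abs_of_nonneg (wallisCoeff_nonneg n),
      pow_mul, sq_abs]
    calc wallisCoeff n * (k ^ 2) ^ n * |sin θ| ^ (2 * (n + 1))
        ≤ wallisCoeff n * (k ^ 2) ^ n :=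
          mul_le_of_le_one_right (mul_nonneg (wallisCoeff_nonneg n) (by positivity))
            (pow_le_one₀ (abs_nonneg _) (abs_sin_le_one θ))
      _ ≤ (k ^ 2) ^ n := mul_le_of_le_one_left (by positivity) (wallisCoeff_le_one n)
  simp_rw [← intervalIntegral.integral_const_mul]
  exact intervalIntegral.hasSum_integral_of_dominated_convergence (fun n _ => (k ^ 2) ^ n)
    (fun n => by fun_prop) (fun n => .of_forall fun θ _ => hbound n θ)
    (.of_forall fun _ _ => summable_geometric_of_lt_one (sq_nonneg k) hk)
    intervalIntegrable_const (.of_forall fun θ _ => hpoint θ)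

lemma wallisCoeff_mul_wallisCoeff_succ (n : ℕ) :
    wallisCoeff n * wallisCoeff (n + 1) = 2 * ((n + 1) / (2 * n + 1)) * wallisCoeff (n + 1) ^ 2 := by
  rw [wallisCoeff_succ]
  field_simp

theorem ellipticD_series (x : ℝ) (hx : x ∈ Set.Ioo (-1:ℝ) 1) (hx0 : x ≠ 0) :
    HasSum (fun i : ℕ =>
        π * (((i : ℝ) + 1) / (2 * (i : ℝ) + 1))
          * ((Nat.doubleFactorial (2 * i + 1) : ℝ) / (Nat.doubleFactorial (2 * i + 2))) ^ 2
          * x ^ (2 * i))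
      ((ellipticK x - ellipticE x) / x ^ 2) := by
  have hx2 : x ^ 2 < 1 := by nlinarith [hx.1, hx.2]
  rw [ellipticK_sub_ellipticE hx2, mul_div_cancel_left₀ _ (pow_ne_zero 2 hx0)]
  refine (hasSum_integral_sin_sq_div_sqrt hx2).congr_fun fun n => ?_
  rw [integral_sin_pow_even_zero_pi_div_two, ← wallisCoeff_succ_eq_doubleFactorial]
  linear_combination (-π / 2 * x ^ (2 * n)) * wallisCoeff_mul_wallisCoeff_succ n
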